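/- Let 𝔤 = 𝔤_{-k} ⊕ ⋯ ⊕ 𝔤_0 be a fundamental non-positively graded Lie algebra. For l = 1, the restriction map induces an isomorphism H^1_1(𝔤_-, 𝔤*) ≅ Hom(𝔤_{-1}, (𝔤_0)*)/B_1(𝔤), where B_1(𝔤) = { β̂ : β ∈ (𝔤_{-1})* } and β̂(X)(Z) = −β([X,Z]) for X ∈ 𝔤_{-1}, Z ∈ 𝔤_0. In particular, every linear map 𝔤_{-1} → (𝔤_0)* extends (trivially on 𝔤_{≤-2}) to a ∂_{𝔤*}-closed 1-cochain of homogeneous degree 1. -/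

import Mathlib

/-!
Since `𝔤` is non-positively graded, `(𝔤^*)_e = (𝔤_{-e})^*` vanishes for `e < 0`. For a
cochain of degree `d ≤ 1` and `x ∈ 𝔤_i`, `y ∈ 𝔤_j` with `i, j < 0`, all three terms of the
cocycle identity lie in `(𝔤^*)_{i+j+d}`, so they vanish: every such cochain on `𝔤_-` is
closed. Hence any `f : 𝔤_{-1} → (𝔤_0)^*`, extended by zero through the projection onto
`𝔤_{-1}`, is a closed cochain of degree one.

Conversely, if `γ` is closed and agrees with the coboundary `∂β` on `𝔤_{-1}`, then `γ - ∂β` is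
closed and vanishes on `𝔤_{-1}`; since `𝔤_{-1}` generates `𝔤_-` by brackets, the cocycle
identity propagates the vanishing from `𝔤_{i+1}` to `𝔤_i` by downward induction.
-/

variable {G : Type*} [LieRing G] [LieAlgebra ℝ G]

/-- The coadjoint action `L_X(α) = -α ∘ ad_X` of `𝔤_-` on `𝔤^*`. -/
noncomputable def coadAct (x : G) (η : G →ₗ[ℝ] ℝ) : G →ₗ[ℝ] ℝ :=
  -(η ∘ₗ (LieAlgebra.ad ℝ G x))

/-- The dual piece `(𝔤^*)_i = (𝔤_{-i})^*` inside `𝔤^*`. -/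
noncomputable def dualPiece (gr : ℤ → Submodule ℝ G) (i : ℤ) :
    Submodule ℝ (G →ₗ[ℝ] ℝ) :=
  ⨅ j ∈ {j : ℤ | j ≠ -i}, Submodule.dualAnnihilator (gr j)

namespace DirectSum.IsInternal

variable {ι R M : Type*} [DecidableEq ι] [Semiring R] [AddCommMonoid M] [Module R M]
  {A : ι → Submodule R M}

noncomputable def proj (h : IsInternal A) (i : ι) : M →ₗ[R] M :=
  (A i).subtype ∘ₗ component R ι (fun j => A j) i ∘ₗ
    (LinearEquiv.ofBijective (coeLinearMap A) h).symm.toLinearMap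

theorem proj_of_mem (h : IsInternal A) {i : ι} {x : M} (hx : x ∈ A i) : h.proj i x = x :=
  congrArg Subtype.val (h.ofBijective_coeLinearMap_of_mem hx)

theorem proj_of_mem_ne (h : IsInternal A) {i j : ι} (hij : j ≠ i) {x : M} (hx : x ∈ A j) :
    h.proj i x = 0 :=
  congrArg Subtype.val (h.ofBijective_coeLinearMap_of_mem_ne hij hx)

end DirectSum.IsInternal

theorem LinearMap.eq_zero_of_mem_iSup₂ {ι R M N : Type*} [CommSemiring R] [AddCommMonoid M]
    [Module R M] [AddCommMonoid N] [Module R N] {P : ι → Prop} {p : ι → Submodule R M}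
    (B : M →ₗ[R] M →ₗ[R] N) (h : ∀ i, P i → ∀ x ∈ p i, ∀ j, P j → ∀ y ∈ p j, B x y = 0)
    {x y : M} (hx : x ∈ ⨆ i, ⨆ _ : P i, p i) (hy : y ∈ ⨆ i, ⨆ _ : P i, p i) : B x y = 0 := by
  have hleft : ∀ i, P i → ∀ x ∈ p i, B x y = 0 := fun i hi x hx =>
    (iSup₂_le fun j hj z hz => (h i hi x hx j hj z hz : B x z = 0) :
      (⨆ j, ⨆ _ : P j, p j) ≤ LinearMap.ker (B x)) hy
  exact (iSup₂_le fun i hi z hz => hleft i hi z hz :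
    (⨆ i, ⨆ _ : P i, p i) ≤ LinearMap.ker (B.flip y)) hx

theorem coadAct_apply (x : G) (η : G →ₗ[ℝ] ℝ) (z : G) : coadAct x η z = -η ⁅x, z⁆ := rfl

theorem coadAct_zero (x : G) : coadAct x (0 : G →ₗ[ℝ] ℝ) = 0 := by
  ext z; simp [coadAct_apply]

theorem coadAct_sub (x : G) (η θ : G →ₗ[ℝ] ℝ) :
    coadAct x (η - θ) = coadAct x η - coadAct x θ := by
  ext z; simp only [coadAct_apply, LinearMap.sub_apply]; ring

def IsCocycleOn (γ : G →ₗ[ℝ] G →ₗ[ℝ] ℝ) (S : Submodule ℝ G) : Prop :=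
  ∀ x ∈ S, ∀ y ∈ S, γ ⁅x, y⁆ = coadAct x (γ y) - coadAct y (γ x)

noncomputable def coboundary (β : G →ₗ[ℝ] ℝ) : G →ₗ[ℝ] G →ₗ[ℝ] ℝ :=
  (LieAlgebra.ad ℝ G : G →ₗ[ℝ] Module.End ℝ G).compr₂ (-β)

theorem coboundary_apply (β : G →ₗ[ℝ] ℝ) (x : G) : coboundary β x = coadAct x β := rfl

theorem isCocycleOn_coboundary (β : G →ₗ[ℝ] ℝ) (S : Submodule ℝ G) :
    IsCocycleOn (coboundary β) S := fun x _ y _ => by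
  ext z
  simp only [coboundary_apply, coadAct_apply, LinearMap.sub_apply, lie_lie, map_sub]
  ring

theorem IsCocycleOn.sub {γ δ : G →ₗ[ℝ] G →ₗ[ℝ] ℝ} {S : Submodule ℝ G} (hγ : IsCocycleOn γ S)
    (hδ : IsCocycleOn δ S) : IsCocycleOn (γ - δ) S := by
  intro x hx y hy
  simp only [LinearMap.sub_apply, hγ x hx y hy, hδ x hx y hy, coadAct_sub]
  abel

noncomputable def cocycleDefect (γ : G →ₗ[ℝ] G →ₗ[ℝ] ℝ) : G →ₗ[ℝ] G →ₗ[ℝ] G →ₗ[ℝ] ℝ :=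
  LinearMap.mk₂ ℝ (fun x y => γ ⁅x, y⁆ - (coadAct x (γ y) - coadAct y (γ x)))
    (fun x x' y => by ext z; simp only [coadAct_apply, add_lie, map_add,
      LinearMap.add_apply, LinearMap.sub_apply]; ring)
    (fun c x y => by ext z; simp only [coadAct_apply, smul_lie, map_smul,
      LinearMap.smul_apply, LinearMap.sub_apply, smul_eq_mul]; ring)
    (fun x y y' => by ext z; simp only [coadAct_apply, add_lie, lie_add, map_add,
      LinearMap.add_apply, LinearMap.sub_apply]; ring)
    (fun c x y => by ext z; simp only [coadAct_apply, smul_lie, lie_smul, map_smul,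
      LinearMap.smul_apply, LinearMap.sub_apply, smul_eq_mul]; ring)

theorem isCocycleOn_iSup₂ {ι : Type*} {P : ι → Prop} {p : ι → Submodule ℝ G}
    {γ : G →ₗ[ℝ] G →ₗ[ℝ] ℝ}
    (h : ∀ i, P i → ∀ x ∈ p i, ∀ j, P j → ∀ y ∈ p j,
      γ ⁅x, y⁆ = coadAct x (γ y) - coadAct y (γ x)) :
    IsCocycleOn γ (⨆ i, ⨆ _ : P i, p i) := fun _ hx _ hy =>
  sub_eq_zero.mp <| (cocycleDefect γ).eq_zero_of_mem_iSup₂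
    (fun i hi x hx j hj y hy => sub_eq_zero.mpr (h i hi x hx j hj y hy)) hx hy

section Graded

variable {gr : ℤ → Submodule ℝ G}

theorem mem_dualPiece_iff {d : ℤ} {η : G →ₗ[ℝ] ℝ} :
    η ∈ dualPiece gr d ↔ ∀ j, j ≠ -d → ∀ z ∈ gr j, η z = 0 := by
  simp [dualPiece, Submodule.mem_iInf, Submodule.mem_dualAnnihilator]

theorem dualPiece_eq_bot (hint : DirectSum.IsInternal gr) {d : ℤ} (hd : gr (-d) = ⊥) :
    dualPiece gr d = ⊥ := by
  refine eq_bot_iff.mpr fun η hη => ?_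
  have hker : (⊤ : Submodule ℝ G) ≤ LinearMap.ker η := by
    rw [← hint.submodule_iSup_eq_top]
    refine iSup_le fun j z hz => ?_
    by_cases hj : j = -d
    · subst hj; rw [hd] at hz; simp [(Submodule.mem_bot ℝ).mp hz]
    · exact mem_dualPiece_iff.mp hη j hj z hz
  exact (Submodule.mem_bot ℝ).mpr (LinearMap.ext fun z => hker Submodule.mem_top)

theorem coadAct_mem_dualPiece (hbkt : ∀ i j : ℤ, ∀ x ∈ gr i, ∀ y ∈ gr j, ⁅x, y⁆ ∈ gr (i + j))
    {i d : ℤ} {x : G} (hx : x ∈ gr i) {η : G →ₗ[ℝ] ℝ} (hη : η ∈ dualPiece gr d) :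
    coadAct x η ∈ dualPiece gr (d + i) := by
  refine mem_dualPiece_iff.mpr fun j hj z hz => ?_
  rw [coadAct_apply, mem_dualPiece_iff.mp hη (i + j) (by omega) _ (hbkt i j x hx z hz), neg_zero]

theorem le_iSup_neg {j : ℤ} (hj : j < 0) : gr j ≤ ⨆ i < (0 : ℤ), gr i :=
  le_iSup₂ (f := fun i (_ : i < (0 : ℤ)) => gr i) j hj

def IsFundamental (gr : ℤ → Submodule ℝ G) : Prop :=
  ∀ i : ℤ, i < -1 → ∀ x ∈ gr i,
    x ∈ Submodule.span ℝ {z : G | ∃ u ∈ gr (-1), ∃ v ∈ gr (i + 1), z = ⁅u, v⁆}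

def IsHomogeneous (gr : ℤ → Submodule ℝ G) (d : ℤ) (γ : G →ₗ[ℝ] G →ₗ[ℝ] ℝ) : Prop :=
  ∀ i, ∀ x ∈ gr i, γ x ∈ dualPiece gr (i + d)

theorem IsHomogeneous.isCocycleOn (hnonpos : ∀ i : ℤ, 0 < i → gr i = ⊥)
    (hbkt : ∀ i j : ℤ, ∀ x ∈ gr i, ∀ y ∈ gr j, ⁅x, y⁆ ∈ gr (i + j))
    (hint : DirectSum.IsInternal gr) {d : ℤ} (hd : d ≤ 1) {γ : G →ₗ[ℝ] G →ₗ[ℝ] ℝ}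
    (hγ : IsHomogeneous gr d γ) : IsCocycleOn γ (⨆ i < (0 : ℤ), gr i) := by
  have hzero : ∀ e < (0 : ℤ), ∀ η ∈ dualPiece gr e, η = 0 := fun e he η hη =>
    (Submodule.mem_bot ℝ).mp (dualPiece_eq_bot hint (hnonpos (-e) (by omega)) ▸ hη)
  refine isCocycleOn_iSup₂ fun i hi x hx j hj y hy => ?_
  rw [hzero _ (by omega) _ (hγ _ _ (hbkt i j x hx y hy)),
    hzero _ (by omega) _ (coadAct_mem_dualPiece hbkt hx (hγ j y hy)),
    hzero _ (by omega) _ (coadAct_mem_dualPiece hbkt hy (hγ i x hx)), sub_zero]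

theorem iSup_neg_le_of_fundamental
    (hfund : IsFundamental gr) {K : Submodule ℝ G} (h1 : gr (-1) ≤ K)
    (hbr : ∀ i < (-1 : ℤ), ∀ u ∈ gr (-1), ∀ v ∈ gr (i + 1), v ∈ K → ⁅u, v⁆ ∈ K) :
    (⨆ i < (0 : ℤ), gr i) ≤ K := by
  suffices h : ∀ i ≤ (-1 : ℤ), gr i ≤ K from iSup₂_le fun i hi => h i (by omega)
  refine Int.leInductionDown h1 fun i hi ih x hx => ?_
  refine (Submodule.span_le.mpr ?_) (hfund (i - 1) (by omega) x hx)
  rintro _ ⟨u, hu, v, hv, rfl⟩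
  exact hbr (i - 1) (by omega) u hu v hv (ih (by simpa using hv))

theorem IsCocycleOn.eq_zero_of_fundamental
    (hfund : IsFundamental gr) {φ : G →ₗ[ℝ] G →ₗ[ℝ] ℝ} (hφ : IsCocycleOn φ (⨆ i < (0 : ℤ), gr i))
    (h1 : ∀ x ∈ gr (-1), φ x = 0) {x : G} (hx : x ∈ ⨆ i < (0 : ℤ), gr i) : φ x = 0 := by
  refine iSup_neg_le_of_fundamental (K := LinearMap.ker φ) hfund h1
    (fun i hi u hu v hv hvφ => ?_) hx
  rw [LinearMap.mem_ker, hφ u (le_iSup_neg (by omega) hu) v (le_iSup_neg (by omega) hv), h1 u hu,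
    LinearMap.mem_ker.mp hvφ, coadAct_zero, coadAct_zero, sub_zero]

theorem IsCocycleOn.eq_coboundary_of_fundamental
    (hfund : IsFundamental gr) {γ : G →ₗ[ℝ] G →ₗ[ℝ] ℝ}
    (hγ : IsCocycleOn γ (⨆ i < (0 : ℤ), gr i)) {β : G →ₗ[ℝ] ℝ}
    (h1 : ∀ x ∈ gr (-1), γ x = coadAct x β) {x : G} (hx : x ∈ ⨆ i < (0 : ℤ), gr i) :
    γ x = coadAct x β :=
  sub_eq_zero.mp <| (hγ.sub (isCocycleOn_coboundary β _)).eq_zero_of_fundamental hfund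
    (fun y hy => sub_eq_zero.mpr (h1 y hy)) hx

end Graded

theorem degree_one_dual_cohomology
    (gr : ℤ → Submodule ℝ G)
    (hnonpos : ∀ i : ℤ, 0 < i → gr i = ⊥)
    (hbkt : ∀ i j : ℤ, ∀ x ∈ gr i, ∀ y ∈ gr j, ⁅x, y⁆ ∈ gr (i + j))
    (hint : DirectSum.IsInternal gr)
    (hfund : ∀ i : ℤ, i < -1 → ∀ x ∈ gr i,
      x ∈ Submodule.span ℝ {z : G | ∃ u ∈ gr (-1), ∃ v ∈ gr (i + 1), z = ⁅u, v⁆}) :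
    -- (a) surjectivity: every linear map `𝔤_{-1} → (𝔤_0)^*` (represented by `f`)
    -- extends, trivially on `𝔤_{≤ -2}`, to a closed degree-one cochain:
    (∀ f : G →ₗ[ℝ] (G →ₗ[ℝ] ℝ), (∀ x ∈ gr (-1), f x ∈ dualPiece gr 0) →
      ∃ γ : G →ₗ[ℝ] (G →ₗ[ℝ] ℝ),
        (∀ i : ℤ, ∀ x ∈ gr i, γ x ∈ dualPiece gr (i + 1)) ∧
        (∀ x ∈ (⨆ i < (0 : ℤ), gr i), ∀ y ∈ (⨆ i < (0 : ℤ), gr i),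
          γ ⁅x, y⁆ = coadAct x (γ y) - coadAct y (γ x)) ∧
        (∀ x ∈ gr (-1), γ x = f x) ∧
        (∀ i : ℤ, i ≤ -2 → ∀ x ∈ gr i, γ x = 0)) ∧
    -- (b) kernel identification: a closed degree-one cochain `γ` restricts on `𝔤_{-1}`
    -- to an element `β̂` of `B_1(𝔤)` (with `β ∈ (𝔤_{-1})^* = (𝔤^*)_1`) iff it is a
    -- coboundary on all of `𝔤_-`:
    (∀ γ : G →ₗ[ℝ] (G →ₗ[ℝ] ℝ),
      (∀ i : ℤ, ∀ x ∈ gr i, γ x ∈ dualPiece gr (i + 1)) →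
      (∀ x ∈ (⨆ i < (0 : ℤ), gr i), ∀ y ∈ (⨆ i < (0 : ℤ), gr i),
        γ ⁅x, y⁆ = coadAct x (γ y) - coadAct y (γ x)) →
      ((∃ β ∈ dualPiece gr 1, ∀ x ∈ gr (-1), γ x = coadAct x β) ↔
        (∃ β ∈ dualPiece gr 1, ∀ x ∈ (⨆ i < (0 : ℤ), gr i), γ x = coadAct x β))) := by
  refine ⟨fun f hf => ?_, fun γ _ hγ => ?_⟩
  · have hres : ∀ x ∈ gr (-1), (f ∘ₗ hint.proj (-1)) x = f x := fun x hx => by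
      rw [LinearMap.comp_apply, hint.proj_of_mem hx]
    have hoff : ∀ i ≠ (-1 : ℤ), ∀ x ∈ gr i, (f ∘ₗ hint.proj (-1)) x = 0 := fun i hi x hx => by
      rw [LinearMap.comp_apply, hint.proj_of_mem_ne hi hx, map_zero]
    have hhom : IsHomogeneous gr 1 (f ∘ₗ hint.proj (-1)) := fun i x hx => by
      by_cases hi : i = -1
      · subst hi; rw [hres x hx]; simpa using hf x hx
      · rw [hoff i hi x hx]; exact zero_mem _
    exact ⟨_, hhom, hhom.isCocycleOn hnonpos hbkt hint le_rfl, hres,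
      fun i hi => hoff i (by omega)⟩
  · exact ⟨fun ⟨β, hβ, h1⟩ => ⟨β, hβ, fun x hx =>
        IsCocycleOn.eq_coboundary_of_fundamental hfund hγ h1 hx⟩,
      fun ⟨β, hβ, h⟩ => ⟨β, hβ, fun x hx => h x (le_iSup_neg (by norm_num) hx)⟩⟩
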